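/- arXiv:1507.05984 — 5 statements merged into one kernel-verified Lean document; each statement's English description precedes it below -/
import Mathlib

section
/- Let Γ be an additive abelian group, let R be a semiprime Γ-graded ring, and let ε ∈ R be a nonzero homogeneous idempotent. Then the corner ring εRε, which is a ring with identity ε and is Γ-graded by (εRε)_γ = εR_γε, is a graded division ring — i.e., every nonzero homogeneous element u ∈ εR_γε has an element v ∈ εRε with uv = vu = ε — if and only if Rε is a minimal graded left ideal of R. -/
/-!
If `Rε` is minimal among graded left ideals, then for every nonzero homogeneous `u ∈ εRε` the
graded left ideal `Ru ⊆ Rε` must be all of `Rε`, so `u` has a homogeneous left inverse in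
`εRε`; in a monoid in which every element has a left inverse, left inverses are two-sided.
Conversely, a nonzero graded left ideal `I ⊆ Rε` contains a nonzero homogeneous `a = aε`;
semiprimeness gives a homogeneous `t` with `a t a ≠ 0`, hence `ε t a ε = ε t a ≠ 0`, and its
inverse in `εRε` exhibits `ε` as an element of `R a ⊆ I`.
-/

open DirectSum

theorem mul_eq_of_left_inverse_has_left_inverse {M : Type*} [Monoid M] {e u v w : M}
    (hu : e * u = u) (hv : e * v = v) (hvu : v * u = e) (hwv : w * v = e) : u * v = e :=
  calc u * v = w * (v * u) * v := by rw [← mul_assoc, hwv, hu]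
    _ = e := by rw [hvu, mul_assoc, hv, hwv]

section Graded

variable {ι R σ : Type*} [DecidableEq ι] [Semiring R] [SetLike σ R] [AddSubmonoidClass σ R]
  (𝒜 : ι → σ)

theorem Ideal.isHomogeneous_span_singleton [AddMonoid ι] [GradedRing 𝒜] {a : R} {i : ι}
    (ha : a ∈ 𝒜 i) : (Ideal.span {a}).IsHomogeneous 𝒜 :=
  Ideal.homogeneous_span 𝒜 _ fun _ hx => Set.mem_singleton_iff.mp hx ▸ ⟨i, ha⟩

theorem Ideal.IsHomogeneous.exists_homogeneous_mem_ne_zero [AddMonoid ι] [GradedRing 𝒜]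
    {I : Ideal R} (hI : I.IsHomogeneous 𝒜) (hI0 : I ≠ ⊥) : ∃ i, ∃ a ∈ 𝒜 i, a ∈ I ∧ a ≠ 0 := by
  obtain ⟨x, hxI, hx0⟩ := Submodule.exists_mem_ne_zero_of_ne_bot hI0
  obtain ⟨i, hi⟩ : ∃ i, (decompose 𝒜 x i : R) ≠ 0 := by
    by_contra! h
    exact hx0 ((decompose 𝒜).injective (DFinsupp.ext fun i => Subtype.ext (by simpa using h i)))
  exact ⟨i, _, SetLike.coe_mem _, hI i hxI, hi⟩

theorem exists_homogeneous_mul_eq_of_mem_span_singleton [AddGroup ι] [GradedRing 𝒜] {a b : R}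
    {i j : ι} (ha : a ∈ 𝒜 i) (hb : b ∈ 𝒜 j) (hab : a ∈ Ideal.span {b}) :
    ∃ w ∈ 𝒜 (i - j), w * b = a := by
  obtain ⟨s, rfl⟩ := Ideal.mem_span_singleton'.mp hab
  refine ⟨decompose 𝒜 s (i - j), SetLike.coe_mem _, ?_⟩
  rw [← coe_decompose_mul_add_of_right_mem 𝒜 hb, sub_add_cancel, decompose_of_mem_same 𝒜 ha]

theorem exists_mul_decompose_mul_ne_zero [Decomposition 𝒜] {x t y : R} (h : x * t * y ≠ 0) :
    ∃ i, x * decompose 𝒜 t i * y ≠ 0 := by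
  classical
  by_contra! h'
  apply h
  rw [← sum_support_decompose 𝒜 t, Finset.mul_sum, Finset.sum_mul]
  exact Finset.sum_eq_zero fun i _ => h' i

variable {ε : R}

theorem mem_of_isHomogeneous_of_le_span_singleton [AddMonoid ι] [GradedRing 𝒜]
    (hsemiprime : ∀ a : R, (∀ r : R, a * r * a = 0) → a = 0) (hidem : ε * ε = ε)
    (hinv : ∀ (γ : ι) (r : R), r ∈ 𝒜 γ → ε * r * ε ≠ 0 → ∃ v : R, v * (ε * r * ε) = ε)
    {I : Ideal R} (hI : I.IsHomogeneous 𝒜) (hle : I ≤ Ideal.span {ε}) (hI0 : I ≠ ⊥) :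
    ε ∈ I := by
  obtain ⟨γ, a, ha, haI, ha0⟩ := hI.exists_homogeneous_mem_ne_zero 𝒜 hI0
  obtain ⟨s, hs⟩ := Ideal.mem_span_singleton'.mp (hle haI)
  have haε : a * ε = a := by rw [← hs, mul_assoc, hidem]
  obtain ⟨t, ht⟩ : ∃ t, a * t * a ≠ 0 := by
    by_contra! h
    exact ha0 (hsemiprime a h)
  obtain ⟨δ, hδ⟩ := exists_mul_decompose_mul_ne_zero 𝒜 ht
  set c : R := (decompose 𝒜 t δ : R)
  have hcorner : ε * (c * a) * ε = ε * c * a := by rw [mul_assoc, mul_assoc, haε, mul_assoc]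
  have hne : ε * c * a ≠ 0 := fun h => hδ <| by
    rw [show a * c * a = s * (ε * c * a) by nth_rw 1 [← hs]; simp only [mul_assoc], h, mul_zero]
  obtain ⟨v, hv⟩ := hinv _ _ (SetLike.mul_mem_graded (SetLike.coe_mem _) ha)
    (hcorner ▸ hne)
  rw [hcorner, ← mul_assoc, ← mul_assoc] at hv
  exact hv ▸ I.mul_mem_left _ haI

theorem exists_homogeneous_left_inverse_of_minimal [AddGroup ι] [GradedRing 𝒜] {u : R} {i j : ι}
    (hε : ε ∈ 𝒜 i) (hu : u ∈ 𝒜 j) (hu0 : u ≠ 0) (huε : u ∈ Ideal.span {ε})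
    (hmin : ∀ I : Ideal R, I.IsHomogeneous 𝒜 → I ≤ Ideal.span {ε} →
      I = ⊥ ∨ I = Ideal.span {ε}) :
    ∃ w ∈ 𝒜 (i - j), w * u = ε := by
  refine exists_homogeneous_mul_eq_of_mem_span_singleton 𝒜 hε hu ?_
  rcases hmin _ (Ideal.isHomogeneous_span_singleton 𝒜 hu)
    ((Ideal.span_singleton_le_iff_mem _).mpr huε) with h | h
  · exact absurd (Ideal.span_singleton_eq_bot.mp h) hu0
  · exact h ▸ Ideal.mem_span_singleton_self ε

theorem exists_corner_inverse_of_minimal [AddGroup ι] [GradedRing 𝒜] {r : R} {i j : ι}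
    (hε0 : ε ≠ 0) (hidem : ε * ε = ε) (hε : ε ∈ 𝒜 i) (hr : r ∈ 𝒜 j) (hne : ε * r * ε ≠ 0)
    (hmin : ∀ I : Ideal R, I.IsHomogeneous 𝒜 → I ≤ Ideal.span {ε} →
      I = ⊥ ∨ I = Ideal.span {ε}) :
    ∃ v : R, ε * v * ε = v ∧ (ε * r * ε) * v = ε ∧ v * (ε * r * ε) = ε := by
  set u := ε * r * ε
  have hεu : ε * u = u := by simp only [u, ← mul_assoc, hidem]
  obtain ⟨w, hw, hwu⟩ := exists_homogeneous_left_inverse_of_minimal 𝒜 hε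
    (SetLike.mul_mem_graded (SetLike.mul_mem_graded hε hr) hε) hne
    (Ideal.mem_span_singleton'.mpr ⟨ε * r, rfl⟩) hmin
  have hvε : ε * (ε * w * ε) = ε * w * ε := by simp only [← mul_assoc, hidem]
  have hvu : ε * w * ε * u = ε := by rw [mul_assoc (ε * w), hεu, mul_assoc, hwu, hidem]
  obtain ⟨w', -, hw'v⟩ := exists_homogeneous_left_inverse_of_minimal 𝒜 hε
    (SetLike.mul_mem_graded (SetLike.mul_mem_graded hε hw) hε)
    (fun h => hε0 (by rw [← hvu, h, zero_mul])) (Ideal.mem_span_singleton'.mpr ⟨ε * w, rfl⟩)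
    hmin
  exact ⟨ε * w * ε, by rw [hvε, mul_assoc, hidem],
    mul_eq_of_left_inverse_has_left_inverse hεu hvε hvu hw'v, hvu⟩

end Graded

/-- Let `Γ` be an additive abelian group, `R` a semiprime `Γ`-graded ring,
and `ε` a nonzero homogeneous idempotent.  The corner ring `εRε` (graded by
`(εRε)_γ = ε R_γ ε`) is a graded division ring — every nonzero homogeneous element
`u = ε r ε` with `r ∈ R_γ` has `v ∈ εRε` with `u v = v u = ε` — if and only if
`Rε` is a minimal graded left ideal of `R`. -/
theorem graded_corner_division_iff_minimal_graded_left_ideal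
    {Γ R : Type*} [AddCommGroup Γ] [DecidableEq Γ] [Ring R]
    (𝒜 : Γ → AddSubgroup R) [GradedRing 𝒜]
    (hsemiprime : ∀ a : R, (∀ r : R, a * r * a = 0) → a = 0)
    (ε : R) (hε : ε ≠ 0) (hidem : ε * ε = ε) (hhom : ∃ γ : Γ, ε ∈ 𝒜 γ) :
    (∀ (γ : Γ) (r : R), r ∈ 𝒜 γ → ε * r * ε ≠ 0 →
        ∃ v : R, ε * v * ε = v ∧ (ε * r * ε) * v = ε ∧ v * (ε * r * ε) = ε) ↔
      ((Submodule.span R {ε} : Ideal R) ≠ ⊥ ∧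
        (∀ x ∈ (Submodule.span R {ε} : Ideal R), ∀ γ : Γ,
          (DirectSum.decompose 𝒜 x γ : R) ∈ (Submodule.span R {ε} : Ideal R)) ∧
        ∀ I : Ideal R,
          (∀ x ∈ I, ∀ γ : Γ, (DirectSum.decompose 𝒜 x γ : R) ∈ I) →
          I ≤ Submodule.span R {ε} → I = ⊥ ∨ I = Submodule.span R {ε}) := by
  obtain ⟨γ₀, hγ₀⟩ := hhom
  constructor
  · intro hdiv
    have hinv γ r hr hne : ∃ v : R, v * (ε * r * ε) = ε :=
      (hdiv γ r hr hne).imp fun _ hv => hv.2.2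
    refine ⟨mt Ideal.span_singleton_eq_bot.mp hε,
      fun x hx γ => Ideal.isHomogeneous_span_singleton 𝒜 hγ₀ γ hx, fun I hI hle => ?_⟩
    refine or_iff_not_imp_left.mpr fun hI0 => le_antisymm hle ?_
    exact (Ideal.span_singleton_le_iff_mem I).mpr
      (mem_of_isHomogeneous_of_le_span_singleton 𝒜 hsemiprime hidem hinv
        (fun γ _ hx => hI _ hx γ) hle hI0)
  · rintro ⟨-, -, hmin⟩ γ r hr hne
    exact exists_corner_inverse_of_minimal 𝒜 hε hidem hγ₀ hr hne
      fun I hI => hmin I fun x hx γ => hI γ hx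
end

section
/- Let K be a field, R an associative unital K-algebra, and M an injective left R-module. Suppose (N_i)_{i ∈ ι} is an independent family of nonzero R-submodules of M (i.e., the sum Σ_{i ∈ ι} N_i is an internal direct sum), where ι is an infinite index set. Then the dimension over K of the endomorphism ring End_R(M) is at least 2^{|ι|}. -/
/-!
Because `M` is injective and the `N i` are independent, any family of maps `N i → M` extends
simultaneously to an endomorphism of `M`: extend it from the internal direct sum `⨁ i, N i ⊆ M`.
Hence `End_R(M)` maps `K`-linearly onto `∏ i, Hom_R(N i, M)`, a product of infinitely many
nonzero `K`-spaces. Such a product contains a copy of `K^ι`, whose dimension is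
`|K| ^ |ι| ≥ 2 ^ |ι|` by the Erdős–Kaplansky theorem.
-/

open Cardinal

universe u v

theorem Submodule.subtype_ne_zero {R M : Type*} [Semiring R] [AddCommMonoid M] [Module R M]
    {N : Submodule R M} (h : N ≠ ⊥) : N.subtype ≠ 0 := by
  obtain ⟨x, hx, hx0⟩ := N.ne_bot_iff.mp h
  exact fun h0 => hx0 (by simpa using LinearMap.congr_fun h0 ⟨x, hx⟩)

theorem two_pow_card_le_rank_pi {K ι : Type u} {V : ι → Type u} [DivisionRing K] [Infinite ι]
    [∀ i, AddCommGroup (V i)] [∀ i, Module K (V i)] [∀ i, Nontrivial (V i)] :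
    2 ^ #ι ≤ Module.rank K (Π i, V i) := by
  choose v hv using fun i => exists_ne (0 : V i)
  have hinj :
      Function.Injective (LinearMap.piMap fun i => LinearMap.toSpanSingleton K (V i) (v i)) :=
    Pi.map_injective.mpr fun i => smul_left_injective K (hv i)
  calc 2 ^ #ι ≤ #K ^ #ι := power_le_power_right (two_le_iff.mpr ⟨0, 1, zero_ne_one⟩)
    _ = Module.rank K (ι → K) := by rw [rank_fun_infinite, power_def]
    _ ≤ Module.rank K (Π i, V i) := LinearMap.rank_le_of_injective _ hinj

theorem Module.Injective.exists_comp_subtype_eq_of_iSupIndep {R M ι : Type*} {Q : Type v}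
    [Ring R] [AddCommGroup M] [Module R M] [AddCommGroup Q] [Module R Q] [Small.{v} R]
    [Module.Injective R Q] {N : ι → Submodule R M} (hN : iSupIndep N) (g : ∀ i, N i →ₗ[R] Q) :
    ∃ f : M →ₗ[R] Q, ∀ i, f ∘ₗ (N i).subtype = g i := by
  classical
  obtain ⟨f, hf⟩ := Module.Injective.extension_property R Q _ _ _ hN.dfinsupp_lsum_injective
    (DFinsupp.lsum ℕ g)
  refine ⟨f, fun i => LinearMap.ext fun x => ?_⟩
  simpa using LinearMap.congr_fun hf (DFinsupp.single i x)

theorem Module.Injective.surjective_pi_lcomp_subtype_of_iSupIndep (S : Type*) {R M ι : Type*}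
    {Q : Type v} [Ring R] [Semiring S] [AddCommGroup M] [Module R M] [AddCommGroup Q]
    [Module R Q] [Module S Q] [SMulCommClass R S Q] [Small.{v} R] [Module.Injective R Q]
    {N : ι → Submodule R M} (hN : iSupIndep N) :
    Function.Surjective (LinearMap.pi fun i => LinearMap.lcomp S Q (N i).subtype) := fun g =>
  (exists_comp_subtype_eq_of_iSupIndep hN g).imp fun _ hf => funext hf

theorem rank_end_of_injective_with_independent_family_general
    {K R M ι : Type u} [Field K] [Ring R]
    [AddCommGroup M] [Module R M] [Module K M]
    [SMulCommClass R K M] [Module.Injective R M] [Infinite ι]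
    (N : ι → Submodule R M) (hne : ∀ i, N i ≠ ⊥)
    (hindep : ∀ i, Disjoint (N i) (⨆ j ∈ ({i}ᶜ : Set ι), N j)) :
    2 ^ Cardinal.mk ι ≤ Module.rank K (M →ₗ[R] M) := by
  have hN : iSupIndep N := fun i => by simpa using hindep i
  have (i : ι) : Nontrivial (N i →ₗ[R] M) := ⟨_, _, Submodule.subtype_ne_zero (hne i)⟩
  calc 2 ^ #ι ≤ Module.rank K (Π i, N i →ₗ[R] M) := two_pow_card_le_rank_pi
    _ ≤ Module.rank K (M →ₗ[R] M) := LinearMap.rank_le_of_surjective _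
      (Module.Injective.surjective_pi_lcomp_subtype_of_iSupIndep K hN)

/-- Let `K` be a field, `R` an associative unital `K`-algebra and `M` an
injective left `R`-module.  If `(N i)_{i ∈ ι}` is an independent family of nonzero
`R`-submodules of `M` with `ι` infinite, then the `K`-dimension of the endomorphism ring
`End_R(M)` is at least `2 ^ |ι|`. -/
theorem rank_end_of_injective_with_independent_family
    {K R M ι : Type u} [Field K] [Ring R] [Algebra K R]
    [AddCommGroup M] [Module R M] [Module K M] [IsScalarTower K R M]
    [SMulCommClass R K M] [Module.Injective R M] [Infinite ι]
    (N : ι → Submodule R M) (hne : ∀ i, N i ≠ ⊥)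
    (hindep : ∀ i, Disjoint (N i) (⨆ j ∈ ({i}ᶜ : Set ι), N j)) :
    2 ^ Cardinal.mk ι ≤ Module.rank K (M →ₗ[R] M) :=
  rank_end_of_injective_with_independent_family_general N hne hindep
end

section
/- Let Γ be an additive abelian group and R a Γ-graded ring. If every graded-simple graded left R-module is projective as an R-module, then R is graded semi-simple: R is the internal direct sum of a family of minimal graded left ideals, i.e., there is an independent family (I_j) of minimal graded left ideals of R whose sum is all of R. -/
/-!
The minimal graded left ideals are the atoms of the lattice of homogeneous left ideals, which is
modular and compactly generated; so it suffices to show that their supremum `S` is `⊤`. Otherwise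
`S` lies in a maximal homogeneous left ideal `m`. Then `R ⧸ m` is graded-simple, hence projective,
so the quotient map has an `R`-linear section `s`. Its degree-zero part
`s₀ x = ∑ i, (s xᵢ)ᵢ` is still a section and is graded, so its range is a homogeneous complement
of `m`. In a modular lattice a complement of a coatom is an atom, yet this atom lies in `S ≤ m`.
-/

universe u v

open DirectSum

section Lattice

variable {α β : Type*} [CompleteLattice α] [CompleteLattice β]

theorem IsCompactElement.map_of_galoisConnection {l : α → β} {u : β → α}
    (gc : GaloisConnection l u) (hu : ∀ s : Set β, u (sSup s) = sSup (u '' s)) {k : α}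
    (hk : IsCompactElement k) : IsCompactElement (l k) := by
  rw [CompleteLattice.isCompactElement_iff_le_of_directed_sSup_le] at hk ⊢
  intro s hne hdir hle
  have hdir' : DirectedOn (· ≤ ·) (u '' s) :=
    directedOn_image.mpr (hdir.mono fun _ _ h => gc.monotone_u h)
  obtain ⟨_, ⟨b, hb, rfl⟩, hkb⟩ := hk (u '' s) (hne.image u) hdir' (hu s ▸ gc.le_u hle)
  exact ⟨b, hb, gc.l_le hkb⟩

theorem GaloisInsertion.isCompactlyGenerated [IsCompactlyGenerated α] {l : α → β} {u : β → α}
    (gi : GaloisInsertion l u) (hu : ∀ s : Set β, u (sSup s) = sSup (u '' s)) :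
    IsCompactlyGenerated β where
  exists_sSup_eq b := by
    obtain ⟨s, hs, hsb⟩ := IsCompactlyGenerated.exists_sSup_eq (u b)
    refine ⟨l '' s, ?_, ?_⟩
    · rintro _ ⟨k, hk, rfl⟩
      exact (hs k hk).map_of_galoisConnection gi.gc hu
    · rw [sSup_image, ← gi.gc.l_sSup, hsb, gi.l_u_eq]

theorem sSup_atoms_eq_top_of_isCoatom_exists_isCompl [IsModularLattice α] [IsCoatomic α]
    (h : ∀ m : α, IsCoatom m → ∃ k, IsCompl m k) : sSup {a : α | IsAtom a} = ⊤ := by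
  by_contra hne
  obtain ⟨m, hm, hle⟩ := (eq_top_or_exists_le_coatom _).resolve_left hne
  obtain ⟨k, hmk⟩ := h m hm
  have hk : IsAtom k := hmk.symm.isAtom_iff_isCoatom.mpr hm
  exact hk.1 (hmk.disjoint.eq_bot_of_ge ((le_sSup (s := {a : α | IsAtom a}) hk).trans hle))

end Lattice

namespace HomogeneousIdeal

variable {ι σ : Type*} [DecidableEq ι] [AddMonoid ι]

section Semiring

variable {A : Type*} [Semiring A] [SetLike σ A] [AddSubmonoidClass σ A] {𝒜 : ι → σ}
  [GradedRing 𝒜]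

theorem toIdeal_sSup_eq_sSup_image (s : Set (HomogeneousIdeal 𝒜)) :
    (sSup s).toIdeal = sSup (toIdeal '' s) := by
  rw [toIdeal_sSup, sSup_image]

instance : IsCompactlyGenerated (HomogeneousIdeal 𝒜) :=
  (Ideal.homogeneousHull.gi 𝒜).isCompactlyGenerated toIdeal_sSup_eq_sSup_image

instance : IsCoatomic (HomogeneousIdeal 𝒜) := by
  refine CompleteLattice.coatomic_of_top_compact ?_
  rw [← (Ideal.homogeneousHull.gi 𝒜).l_top]
  exact Ideal.isCompactElement_top.map_of_galoisConnection (Ideal.homogeneousHull.gc 𝒜)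
    toIdeal_sSup_eq_sSup_image

theorem isCompl_iff_isCompl_toIdeal {I J : HomogeneousIdeal 𝒜} :
    IsCompl I J ↔ IsCompl I.toIdeal J.toIdeal := by
  simp only [isCompl_iff, disjoint_iff, codisjoint_iff, eq_bot_iff, eq_top_iff, toIdeal_inf,
    toIdeal_sup]

theorem iSupIndep_toIdeal {κ : Type*} {t : κ → HomogeneousIdeal 𝒜} (ht : iSupIndep t) :
    iSupIndep fun i => (t i).toIdeal := by
  intro i
  rw [disjoint_iff, ← toIdeal_iSup₂, ← toIdeal_inf, (ht i).eq_bot, toIdeal_bot]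

theorem eq_bot_or_eq_of_isAtom {I : HomogeneousIdeal 𝒜} (hI : IsAtom I) {J : Ideal A}
    (hJ : J.IsHomogeneous 𝒜) (hJI : J ≤ I.toIdeal) : J = ⊥ ∨ J = I.toIdeal :=
  (hI.le_iff.mp (show (⟨J, hJ⟩ : HomogeneousIdeal 𝒜) ≤ I from hJI)).imp
    (congrArg toIdeal) (congrArg toIdeal)

end Semiring

instance {R : Type*} [Ring R] [SetLike σ R] [AddSubmonoidClass σ R] {𝒜 : ι → σ}
    [GradedRing 𝒜] : IsModularLattice (HomogeneousIdeal 𝒜) where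
  sup_inf_le_assoc_of_le {_} y {_} h := by
    simpa only [← toIdeal_le_toIdeal_iff, toIdeal_sup, toIdeal_inf] using
      IsModularLattice.sup_inf_le_assoc_of_le y.toIdeal (toIdeal_le_toIdeal_iff.mpr h)

end HomogeneousIdeal

section GradedMaps

variable {ι M N Q σ τ υ : Type*} [DecidableEq ι] [AddCommMonoid M] [AddCommMonoid N]
  [AddCommMonoid Q] [SetLike σ M] [AddSubmonoidClass σ M] [SetLike τ N] [AddSubmonoidClass τ N]
  [SetLike υ Q] [AddSubmonoidClass υ Q] {ℳ : ι → σ} {𝒩 : ι → τ} {𝒬 : ι → υ}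
  [Decomposition ℳ] [Decomposition 𝒩] [Decomposition 𝒬]

theorem DirectSum.coe_decompose_map_of_mapsTo {F : Type*} [FunLike F M N]
    [AddMonoidHomClass F M N] {g : F} (hg : ∀ i, Set.MapsTo g (ℳ i) (𝒩 i)) (x : M) (i : ι) :
    (decompose 𝒩 (g x) i : N) = g (decompose ℳ x i) := by
  induction x using Decomposition.inductionOn ℳ with
  | zero => simp
  | @homogeneous j x =>
    rw [decompose_of_mem 𝒩 (hg j x.2), decompose_coe, coe_of_apply, coe_of_apply]
    split_ifs <;> simp
  | add x y hx hy => simp only [map_add, decompose_add, add_apply, AddMemClass.coe_add, hx, hy]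

namespace AddMonoidHom

variable (ℳ 𝒩) in
def degreeZeroPart (f : M →+ N) : M →+ N :=
  (toAddMonoid fun i =>
    ({ toFun x := (decompose 𝒩 (f x) i : N)
       map_zero' := by simp
       map_add' x y := by simp } : ℳ i →+ N)).comp
    (decomposeAddEquiv ℳ).toAddMonoidHom

theorem degreeZeroPart_apply_of_mem (f : M →+ N) {x : M} {i : ι} (hx : x ∈ ℳ i) :
    f.degreeZeroPart ℳ 𝒩 x = decompose 𝒩 (f x) i := by
  rw [degreeZeroPart, comp_apply, AddEquiv.coe_toAddMonoidHom, decomposeAddEquiv_apply,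
    decompose_of_mem ℳ hx, toAddMonoid_of]
  rfl

theorem degreeZeroPart_mapsTo (f : M →+ N) (i : ι) :
    Set.MapsTo (f.degreeZeroPart ℳ 𝒩) (ℳ i) (𝒩 i) := fun x hx => by
  rw [SetLike.mem_coe, degreeZeroPart_apply_of_mem f hx]
  exact (decompose 𝒩 (f x) i).2

theorem degreeZeroPart_comp (f : M →+ N) {g : N →+ Q} (hg : ∀ i, Set.MapsTo g (𝒩 i) (𝒬 i)) :
    (g.comp f).degreeZeroPart ℳ 𝒬 = g.comp (f.degreeZeroPart ℳ 𝒩) := by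
  ext x
  induction x using Decomposition.inductionOn ℳ with
  | zero => simp
  | homogeneous x =>
    rw [comp_apply, degreeZeroPart_apply_of_mem _ x.2, degreeZeroPart_apply_of_mem _ x.2,
      comp_apply, coe_decompose_map_of_mapsTo hg]
  | add x y hx hy => rw [map_add, map_add, hx, hy]

theorem degreeZeroPart_id : (AddMonoidHom.id M).degreeZeroPart ℳ ℳ = AddMonoidHom.id M := by
  ext x
  induction x using Decomposition.inductionOn ℳ with
  | zero => simp
  | homogeneous x => rw [degreeZeroPart_apply_of_mem _ x.2, id_apply, decompose_coe, of_eq_same]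
  | add x y hx hy => rw [map_add, map_add, hx, hy]

end AddMonoidHom

variable {R : Type*} [Semiring R] [Module R M] [Module R N]

theorem Submodule.IsHomogeneous.comap {P : Submodule R N} (hP : P.IsHomogeneous 𝒩)
    {g : M →ₗ[R] N} (hg : ∀ i, Set.MapsTo g (ℳ i) (𝒩 i)) : (P.comap g).IsHomogeneous ℳ :=
  fun i x hx => by
    rw [Submodule.mem_comap, ← coe_decompose_map_of_mapsTo hg]
    exact hP i hx

theorem LinearMap.isHomogeneous_range {g : M →ₗ[R] N} (hg : ∀ i, Set.MapsTo g (ℳ i) (𝒩 i)) :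
    (LinearMap.range g).IsHomogeneous 𝒩 := by
  rintro i _ ⟨x, rfl⟩
  rw [coe_decompose_map_of_mapsTo hg]
  exact LinearMap.mem_range_self g _

end GradedMaps

section QuotientGrading

variable {ι R M : Type*} [Ring R] [AddCommGroup M] [Module R M]
  (ℳ : ι → AddSubgroup M) (N : Submodule R M)

def quotientGrading (i : ι) : AddSubgroup (M ⧸ N) :=
  (ℳ i).map N.mkQ.toAddMonoidHom

variable {ℳ N} in
theorem mkQ_mapsTo_quotientGrading (i : ι) : Set.MapsTo N.mkQ (ℳ i) (quotientGrading ℳ N i) :=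
  fun x hx => ⟨x, hx, rfl⟩

variable [DecidableEq ι] [Decomposition ℳ]

def quotientDecomposeHom : M →+ ⨁ i, quotientGrading ℳ N i :=
  (DirectSum.map fun i => N.mkQ.toAddMonoidHom.addSubgroupMap (ℳ i)).comp
    (decomposeAddEquiv ℳ).toAddMonoidHom

theorem quotientDecomposeHom_of_mem {x : M} {i : ι} (hx : x ∈ ℳ i) :
    quotientDecomposeHom ℳ N x = of _ i ⟨N.mkQ x, mkQ_mapsTo_quotientGrading i hx⟩ := by
  change DirectSum.map _ (decompose ℳ x) = _
  rw [decompose_of_mem ℳ hx, map_of]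
  rfl

theorem coeAddMonoidHom_quotientDecomposeHom (x : M) :
    DirectSum.coeAddMonoidHom (quotientGrading ℳ N) (quotientDecomposeHom ℳ N x) = N.mkQ x := by
  induction x using Decomposition.inductionOn ℳ with
  | zero => simp
  | homogeneous x => rw [quotientDecomposeHom_of_mem ℳ N x.2, coeAddMonoidHom_of]
  | add x y hx hy => rw [map_add, map_add, hx, hy, map_add]

variable {N} in
theorem le_ker_quotientDecomposeHom (hN : N.IsHomogeneous ℳ) :
    N.toAddSubgroup ≤ (quotientDecomposeHom ℳ N).ker := fun x hx => by
  ext i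
  change N.mkQ (decompose ℳ x i : M) = 0
  exact (Submodule.Quotient.mk_eq_zero N).mpr (hN i hx)

variable {N} in
@[reducible] def quotientDecomposition (hN : N.IsHomogeneous ℳ) :
    Decomposition (quotientGrading ℳ N) :=
  let decompose : M ⧸ N →+ ⨁ i, quotientGrading ℳ N i :=
    QuotientAddGroup.lift N.toAddSubgroup (quotientDecomposeHom ℳ N)
      (le_ker_quotientDecomposeHom ℳ hN)
  .ofAddHom (quotientGrading ℳ N) decompose
    (AddMonoidHom.ext fun y => by
      obtain ⟨x, rfl⟩ := N.mkQ_surjective y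
      exact coeAddMonoidHom_quotientDecomposeHom ℳ N x)
    (DirectSum.addHom_ext fun i y => by
      obtain ⟨x, hx, hxy⟩ := y.2
      obtain rfl : y = ⟨N.mkQ x, mkQ_mapsTo_quotientGrading i hx⟩ := Subtype.ext hxy.symm
      rw [AddMonoidHom.comp_apply, coeAddMonoidHom_of]
      exact quotientDecomposeHom_of_mem ℳ N hx)

end QuotientGrading

instance quotientGrading.gradedSMul {ι R M σ : Type*} [Add ι] [Ring R] [AddCommGroup M]
    [Module R M] [SetLike σ R] (𝒜 : ι → σ) (ℳ : ι → AddSubgroup M) [SetLike.GradedSMul 𝒜 ℳ]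
    (N : Submodule R M) : SetLike.GradedSMul 𝒜 (quotientGrading ℳ N) where
  smul_mem _ _ a _ ha := by
    rintro ⟨x, hx, rfl⟩
    exact ⟨a • x, SetLike.GradedSMul.smul_mem ha hx, N.mkQ.map_smul a x⟩

section GradedModule

variable {ι R M N σ τ υ : Type*} [DecidableEq ι] [AddLeftCancelMonoid ι] [Semiring R]
  [SetLike σ R] (𝒜 : ι → σ)
  [AddCommMonoid M] [Module R M] [SetLike τ M] [AddSubmonoidClass τ M]
  (ℳ : ι → τ) [Decomposition ℳ] [SetLike.GradedSMul 𝒜 ℳ]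

theorem DirectSum.coe_decompose_smul_add_of_left_mem {a : R} {i : ι} (ha : a ∈ 𝒜 i) (x : M)
    (j : ι) : (decompose ℳ (a • x) (i + j) : M) = a • (decompose ℳ x j : M) := by
  induction x using Decomposition.inductionOn ℳ with
  | zero => simp
  | @homogeneous k x =>
    rw [decompose_of_mem ℳ (SetLike.GradedSMul.smul_mem ha x.2), decompose_coe, coe_of_apply,
      coe_of_apply]
    by_cases hkj : k = j
    · subst hkj
      simp
    · simp [hkj]
  | add x y hx hy => simp only [smul_add, decompose_add, add_apply, AddMemClass.coe_add, hx, hy]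

variable [AddSubmonoidClass σ R] [Decomposition 𝒜]
  [AddCommMonoid N] [Module R N] [SetLike υ N] [AddSubmonoidClass υ N]
  (𝒩 : ι → υ) [Decomposition 𝒩] [SetLike.GradedSMul 𝒜 𝒩]

def LinearMap.degreeZeroPart (f : M →ₗ[R] N) : M →ₗ[R] N where
  __ := f.toAddMonoidHom.degreeZeroPart ℳ 𝒩
  map_smul' a x := by
    induction a using Decomposition.inductionOn 𝒜 with
    | zero => simp
    | @homogeneous i a =>
      induction x using Decomposition.inductionOn ℳ with
      | zero => simp
      | @homogeneous j x =>
        simp only [AddMonoidHom.toFun_eq_coe, RingHom.id_apply,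
          AddMonoidHom.degreeZeroPart_apply_of_mem _ x.2,
          AddMonoidHom.degreeZeroPart_apply_of_mem _ (SetLike.GradedSMul.smul_mem a.2 x.2),
          toAddMonoidHom_coe, map_smul]
        exact coe_decompose_smul_add_of_left_mem 𝒜 𝒩 a.2 _ j
      | add x y hx hy => simp_all
    | add a b ha hb => simp_all [add_smul]

end GradedModule

theorem Submodule.isCompl_range_of_mkQ_comp_eq_id {R M : Type*} [Ring R] [AddCommGroup M]
    [Module R M] {N : Submodule R M} {s : M ⧸ N →ₗ[R] M} (hs : N.mkQ ∘ₗ s = LinearMap.id) :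
    IsCompl N (LinearMap.range s) := by
  have hs' (y : M ⧸ N) : N.mkQ (s y) = y := LinearMap.congr_fun hs y
  constructor
  · rw [Submodule.disjoint_def]
    rintro _ hN ⟨y, rfl⟩
    obtain rfl : y = 0 := (hs' y).symm.trans ((Submodule.Quotient.mk_eq_zero N).mpr hN)
    exact map_zero s
  · rw [codisjoint_iff, eq_top_iff]
    intro x _
    have hx : x - s (N.mkQ x) ∈ N := by
      rw [← Submodule.Quotient.mk_eq_zero N, Submodule.Quotient.mk_sub]
      exact sub_eq_zero.mpr (hs' (N.mkQ x)).symm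
    exact Submodule.mem_sup.mpr ⟨_, hx, _, LinearMap.mem_range_self s _, sub_add_cancel x _⟩

section Splitting

variable {ι R M σ : Type*} [DecidableEq ι] [AddLeftCancelMonoid ι] [Ring R] [SetLike σ R]
  [AddSubmonoidClass σ R] [AddCommGroup M] [Module R M]

theorem Submodule.exists_isHomogeneous_isCompl_of_projective (𝒜 : ι → σ) [Decomposition 𝒜]
    {ℳ : ι → AddSubgroup M} [Decomposition ℳ] [SetLike.GradedSMul 𝒜 ℳ] {N : Submodule R M}
    (hN : N.IsHomogeneous ℳ) [Module.Projective R (M ⧸ N)] :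
    ∃ K : Submodule R M, K.IsHomogeneous ℳ ∧ IsCompl N K := by
  let _ := quotientDecomposition ℳ hN
  obtain ⟨s, hs⟩ := Module.projective_lifting_property N.mkQ LinearMap.id N.mkQ_surjective
  set s₀ := s.degreeZeroPart 𝒜 (quotientGrading ℳ N) ℳ
  have hs₀ : N.mkQ ∘ₗ s₀ = LinearMap.id := by
    refine LinearMap.toAddMonoidHom_injective ?_
    change N.mkQ.toAddMonoidHom.comp (s.toAddMonoidHom.degreeZeroPart _ _) = _
    rw [← AddMonoidHom.degreeZeroPart_comp _ mkQ_mapsTo_quotientGrading]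
    exact (congrArg (AddMonoidHom.degreeZeroPart _ _ ∘ LinearMap.toAddMonoidHom) hs).trans
      AddMonoidHom.degreeZeroPart_id
  have hs₀_mapsTo : ∀ i, Set.MapsTo s₀ (quotientGrading ℳ N i) (ℳ i) :=
    AddMonoidHom.degreeZeroPart_mapsTo s.toAddMonoidHom
  exact ⟨_, LinearMap.isHomogeneous_range hs₀_mapsTo, isCompl_range_of_mkQ_comp_eq_id hs₀⟩

end Splitting

namespace HomogeneousIdeal

variable {ι R : Type*} [DecidableEq ι] [AddMonoid ι] [Ring R] {𝒜 : ι → AddSubgroup R}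
  [GradedRing 𝒜]

theorem eq_bot_or_eq_top_of_isCoatom {m : HomogeneousIdeal 𝒜} (hm : IsCoatom m)
    [Decomposition (quotientGrading 𝒜 m.toIdeal)] {P : Submodule R (R ⧸ m.toIdeal)}
    (hP : P.IsHomogeneous (quotientGrading 𝒜 m.toIdeal)) : P = ⊥ ∨ P = ⊤ := by
  set Q : HomogeneousIdeal 𝒜 := ⟨P.comap m.toIdeal.mkQ, hP.comap mkQ_mapsTo_quotientGrading⟩
  have hmQ : m ≤ Q := fun x hx => by
    change m.toIdeal.mkQ x ∈ P
    rw [Submodule.mkQ_apply, (Submodule.Quotient.mk_eq_zero _).mpr hx]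
    exact P.zero_mem
  have hinj := Submodule.comap_injective_of_surjective m.toIdeal.mkQ_surjective
  refine (hm.le_iff.mp hmQ).symm.imp (fun h => hinj ?_) (fun h => hinj ?_)
  · rw [Submodule.comap_bot, Submodule.ker_mkQ]
    exact congrArg toIdeal h
  · rw [Submodule.comap_top]
    exact (congrArg toIdeal h).trans toIdeal_top

end HomogeneousIdeal

/-- Let `R` be a `Γ`-graded ring.  If every graded-simple graded left
`R`-module is projective as an `R`-module, then `R` is graded semi-simple: `R` is the
internal direct sum of an independent family of minimal graded left ideals. -/
theorem graded_semisimple_of_gradedSimple_projective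
    {Γ : Type v} {R : Type u} [AddCommGroup Γ] [DecidableEq Γ] [Ring R]
    (𝒜 : Γ → AddSubgroup R) [GradedRing 𝒜]
    (hproj : ∀ (M : Type u) [AddCommGroup M] [Module R M]
      (ℳ : Γ → AddSubgroup M) [DirectSum.Decomposition ℳ],
      (∀ (γ δ : Γ) (r : R), r ∈ 𝒜 γ → ∀ m ∈ ℳ δ, r • m ∈ ℳ (γ + δ)) →
      Nontrivial M →
      (∀ N : Submodule R M,
        (∀ x ∈ N, ∀ γ : Γ, (DirectSum.decompose ℳ x γ : M) ∈ N) → N = ⊥ ∨ N = ⊤) →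
      Module.Projective R M) :
    ∃ (ι : Type u) (I : ι → Ideal R),
      (∀ i, I i ≠ ⊥) ∧
      (∀ i, ∀ x ∈ I i, ∀ γ : Γ, (DirectSum.decompose 𝒜 x γ : R) ∈ I i) ∧
      (∀ i, ∀ J : Ideal R,
        (∀ x ∈ J, ∀ γ : Γ, (DirectSum.decompose 𝒜 x γ : R) ∈ J) →
        J ≤ I i → J = ⊥ ∨ J = I i) ∧
      (∀ i, Disjoint (I i) (⨆ j ∈ ({i}ᶜ : Set ι), I j)) ∧
      (⨆ i, I i) = ⊤ := by
  have hcompl (m : HomogeneousIdeal 𝒜) (hm : IsCoatom m) : ∃ k, IsCompl m k := by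
    let _ := quotientDecomposition 𝒜 m.isHomogeneous
    have : Module.Projective R (R ⧸ m.toIdeal) :=
      hproj _ (quotientGrading 𝒜 m.toIdeal)
        (fun _ _ _ hr _ hx => SetLike.GradedSMul.smul_mem hr hx)
        (Submodule.Quotient.nontrivial_iff.mpr ((HomogeneousIdeal.eq_top_iff _).not.mp hm.ne_top))
        (fun P hP => HomogeneousIdeal.eq_bot_or_eq_top_of_isCoatom hm fun γ x hx => hP x hx γ)
    obtain ⟨K, hK, hmK⟩ := Submodule.exists_isHomogeneous_isCompl_of_projective 𝒜 m.isHomogeneous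
    exact ⟨⟨K, hK⟩, HomogeneousIdeal.isCompl_iff_isCompl_toIdeal.mpr hmK⟩
  obtain ⟨s, hind, hsup, hatom⟩ :=
    exists_sSupIndep_of_sSup_atoms_eq_top (sSup_atoms_eq_top_of_isCoatom_exists_isCompl hcompl)
  refine ⟨s, fun I => I.1.toIdeal, fun I => (HomogeneousIdeal.eq_bot_iff _).not.mp (hatom I.2).1,
    fun I x hx γ => I.1.isHomogeneous γ hx,
    fun I J hJ => HomogeneousIdeal.eq_bot_or_eq_of_isAtom (hatom I.2) fun γ x hx => hJ x hx γ,
    HomogeneousIdeal.iSupIndep_toIdeal ((sSupIndep_iff s).mp hind), ?_⟩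
  rw [← HomogeneousIdeal.toIdeal_iSup, ← sSup_eq_iSup', hsup, HomogeneousIdeal.toIdeal_top]
end

section
/- Let Γ be an additive abelian group and R a Γ-graded ring. Suppose R is the union of an upward-directed family (B_λ)_{λ ∈ Λ} of subrings such that: (a) each B_λ is a graded subring, i.e., for every b ∈ B_λ all homogeneous components of b lie in B_λ; and (b) every left ideal of each B_λ is graded, i.e., whenever I ⊆ B_λ is an additive subgroup with B_λ · I ⊆ I, then for every x ∈ I all homogeneous components of x lie in I. Then every left ideal M of R is graded: for every a ∈ M, all homogeneous components of a lie in M. -/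
open DirectSum

theorem decompose_mem_ideal_of_mem_nonUnitalSubring {ι R : Type*} [DecidableEq ι] [Ring R]
    {𝒜 : ι → AddSubgroup R} [Decomposition 𝒜] {B : NonUnitalSubring R}
    (hB : ∀ I : AddSubgroup R, (I : Set R) ⊆ B → (∀ b ∈ B, ∀ x ∈ I, b * x ∈ I) →
      ∀ x ∈ I, ∀ i, (decompose 𝒜 x i : R) ∈ I)
    {M : Ideal R} {a : R} (haB : a ∈ B) (haM : a ∈ M) (i : ι) :
    (decompose 𝒜 a i : R) ∈ M := by
  let I : AddSubgroup R := B.toAddSubgroup ⊓ M.toAddSubgroup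
  have hIB : (I : Set R) ⊆ B := fun _ hx => hx.1
  have hI_left : ∀ b ∈ B, ∀ x ∈ I, b * x ∈ I := fun b hb _ hx =>
    ⟨B.mul_mem hb hx.1, M.mul_mem_left b hx.2⟩
  exact (hB I hIB hI_left a ⟨haB, haM⟩ i).2

theorem every_left_ideal_graded_of_directed_union_general
    {Γ R Λ : Type*} [AddCommGroup Γ] [DecidableEq Γ] [Ring R]
    (𝒜 : Γ → AddSubgroup R) [GradedRing 𝒜]
    (B : Λ → NonUnitalSubring R)
    (hunion : ∀ r : R, ∃ l : Λ, r ∈ B l)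
    (hideals : ∀ (l : Λ) (I : AddSubgroup R), (I : Set R) ⊆ (B l : Set R) →
      (∀ b ∈ B l, ∀ x ∈ I, b * x ∈ I) →
      ∀ x ∈ I, ∀ γ : Γ, (DirectSum.decompose 𝒜 x γ : R) ∈ I) :
    ∀ M : Ideal R, ∀ a ∈ M, ∀ γ : Γ, (DirectSum.decompose 𝒜 a γ : R) ∈ M := by
  intro M a haM γ
  obtain ⟨l, haB⟩ := hunion a
  exact decompose_mem_ideal_of_mem_nonUnitalSubring (hideals l) haB haM γ

/-- Let `R` be a `Γ`-graded ring which is the union of an upward-directed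
family `(B l)` of (not necessarily unital) subrings such that each `B l` is a graded
subring (closed under taking homogeneous components), and every left ideal of each `B l`
is graded.  Then every left ideal `M` of `R` is graded: for every `a ∈ M` all the
homogeneous components of `a` lie in `M`. -/
theorem every_left_ideal_graded_of_directed_union
    {Γ R Λ : Type*} [AddCommGroup Γ] [DecidableEq Γ] [Ring R]
    (𝒜 : Γ → AddSubgroup R) [GradedRing 𝒜]
    (B : Λ → NonUnitalSubring R)
    (hdir : ∀ l m : Λ, ∃ n : Λ, B l ≤ B n ∧ B m ≤ B n)
    (hunion : ∀ r : R, ∃ l : Λ, r ∈ B l)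
    (hgraded : ∀ l : Λ, ∀ b ∈ B l, ∀ γ : Γ, (DirectSum.decompose 𝒜 b γ : R) ∈ B l)
    (hideals : ∀ (l : Λ) (I : AddSubgroup R), (I : Set R) ⊆ (B l : Set R) →
      (∀ b ∈ B l, ∀ x ∈ I, b * x ∈ I) →
      ∀ x ∈ I, ∀ γ : Γ, (DirectSum.decompose 𝒜 x γ : R) ∈ I) :
    ∀ M : Ideal R, ∀ a ∈ M, ∀ γ : Γ, (DirectSum.decompose 𝒜 a γ : R) ∈ M :=
  every_left_ideal_graded_of_directed_union_general 𝒜 B hunion hideals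
end

section
/- Let K be a field and let p be an irreducible element of the Laurent polynomial ring K[x, x⁻¹]. Then the quotient M = K[x, x⁻¹]/(p) is a simple K[x, x⁻¹]-module, but M admits no compatible ℤ-grading: there is no family of additive subgroups (M_n)_{n ∈ ℤ} of M with M = ⨁_{n ∈ ℤ} M_n and (K·xᵐ)·M_n ⊆ M_{m+n} for all m, n ∈ ℤ. -/
/-!
`K[x, x⁻¹]` is a localization of the principal ideal domain `K[x]`, hence itself a PID, so an
irreducible `p` generates a maximal ideal and `M = K[x, x⁻¹]/(p)` is simple. If `M` were graded,
it would contain a nonzero homogeneous `y ∈ M_n`. Writing `p = ∑ cₘ xᵐ`, the summands of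
`0 = p • y` lie in the pairwise distinct degrees `m + n`, so each `cₘ xᵐ • y` vanishes; but
`cₘ xᵐ` is a unit for `cₘ ≠ 0`, forcing `y = 0`.
-/

open LaurentPolynomial

theorem IsLocalization.isPrincipalIdealRing {R : Type*} [CommRing R] [IsPrincipalIdealRing R]
    (M : Submonoid R) (S : Type*) [CommRing S] [Algebra R S] [IsLocalization M S] :
    IsPrincipalIdealRing S where
  principal I := by
    obtain ⟨q, hq⟩ := IsPrincipalIdealRing.principal (I.comap (algebraMap R S))
    refine ⟨algebraMap R S q, ?_⟩
    rw [← IsLocalization.map_under M S I, Ideal.under_def, hq, Ideal.submodule_span_eq,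
      Ideal.map_span, Set.image_singleton]

instance LaurentPolynomial.isPrincipalIdealRing {K : Type*} [Field K] :
    IsPrincipalIdealRing K[T;T⁻¹] :=
  IsLocalization.isPrincipalIdealRing (Submonoid.powers (Polynomial.X : Polynomial K)) _

theorem Ideal.Quotient.smul_eq_zero_of_mem {R : Type*} [CommRing R] {I : Ideal R} {r : R}
    (hr : r ∈ I) (z : R ⧸ I) : r • z = 0 := by
  obtain ⟨a, rfl⟩ := Ideal.Quotient.mk_surjective z
  rw [Algebra.smul_def, Ideal.Quotient.algebraMap_eq, ← map_mul, Ideal.Quotient.eq_zero_iff_mem]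
  exact I.mul_mem_right a hr

namespace DirectSum.IsInternal

variable {ι M σ : Type*} [DecidableEq ι] [AddCommMonoid M] [SetLike σ M] [AddSubmonoidClass σ M]
  {ℳ : ι → σ}

theorem eq_zero_of_sum_eq_zero (h : IsInternal ℳ) {α : Type*} {s : Finset α} {d : α → ι}
    (hd : Set.InjOn d s) {x : α → M} (hx : ∀ a ∈ s, x a ∈ ℳ (d a))
    (hsum : ∑ a ∈ s, x a = 0) {a : α} (ha : a ∈ s) : x a = 0 := by
  let := h.chooseDecomposition
  have hcomp := congrArg (fun z => (decompose ℳ z (d a) : M)) hsum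
  simp only [decompose_sum, decompose_zero, DirectSum.sum_apply, zero_apply, ZeroMemClass.coe_zero,
    AddSubmonoidClass.coe_finsetSum] at hcomp
  rwa [Finset.sum_eq_single_of_mem a ha fun b hb hba =>
      decompose_of_mem_ne ℳ (hx b hb) (hd.ne hb ha hba), decompose_of_mem_same ℳ (hx a ha)] at hcomp

theorem exists_mem_ne_zero [Nontrivial M] (h : IsInternal ℳ) : ∃ i, ∃ x ∈ ℳ i, x ≠ 0 := by
  let := h.chooseDecomposition
  obtain ⟨z, hz⟩ := exists_ne (0 : M)
  have hdec : decompose ℳ z ≠ 0 := by rwa [← decompose_zero ℳ, (decompose ℳ).injective.ne_iff]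
  obtain ⟨i, hi⟩ := DFunLike.ne_iff.mp hdec
  exact ⟨i, _, (decompose ℳ z i).2, fun h0 => hi (Subtype.ext h0)⟩

end DirectSum.IsInternal

theorem LaurentPolynomial.sum_C_mul_T {R : Type*} [Semiring R] (f : R[T;T⁻¹]) :
    ∑ m ∈ f.coeff.support, C (f.coeff m) * T m = f := by
  simp_rw [← single_eq_C_mul_T]
  exact f.sum_coeff_single

theorem LaurentPolynomial.eq_zero_of_smul_eq_zero_of_mem {K M : Type*} [DivisionRing K]
    [AddCommGroup M] [Module K[T;T⁻¹] M] {ℳ : ℤ → AddSubgroup M} (hℳ : DirectSum.IsInternal ℳ)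
    (hsmul : ∀ (k : K) (m n : ℤ), ∀ y ∈ ℳ n, (C k * T m : K[T;T⁻¹]) • y ∈ ℳ (m + n))
    {f : K[T;T⁻¹]} (hf : f ≠ 0) {n : ℤ} {y : M} (hy : y ∈ ℳ n) (hfy : f • y = 0) : y = 0 := by
  obtain ⟨m, hm⟩ : f.coeff.support.Nonempty := by
    rwa [Finsupp.support_nonempty_iff, Ne, AddMonoidAlgebra.coeff_eq_zero]
  have hterm : (C (f.coeff m) * T m) • y = 0 :=
    hℳ.eq_zero_of_sum_eq_zero (d := (· + n)) (add_left_injective n).injOn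
      (fun m _ => hsmul _ m n y hy) (by rw [← Finset.sum_smul, sum_C_mul_T, hfy]) hm
  have hunit : IsUnit (C (f.coeff m) * T m) :=
    ((Finsupp.mem_support_iff.mp hm).isUnit.map C).mul (isUnit_T m)
  exact hunit.smul_eq_zero.mp hterm

/-- Let `K` be a field and `p` an irreducible element of the Laurent
polynomial ring `K[x,x⁻¹]`.  Then `M = K[x,x⁻¹]/(p)` is a simple `K[x,x⁻¹]`-module, yet
`M` admits no compatible ℤ-grading: there is no family of additive subgroups
`(M_n)_{n ∈ ℤ}` with `M = ⨁_{n} M_n` and `(K·xᵐ) • M_n ⊆ M_{m+n}` for all `m, n`. -/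
theorem simple_quotient_of_laurent_not_gradable
    {K : Type*} [Field K] (p : LaurentPolynomial K) (hp : Irreducible p) :
    IsSimpleModule (LaurentPolynomial K)
      (LaurentPolynomial K ⧸ Ideal.span {p}) ∧
    ¬ ∃ ℳ : ℤ → AddSubgroup (LaurentPolynomial K ⧸ Ideal.span {p}),
        DirectSum.IsInternal ℳ ∧
        ∀ (k : K) (m n : ℤ), ∀ y ∈ ℳ n,
          ((C k * T m : LaurentPolynomial K) • y) ∈ ℳ (m + n) := by
  have hmax : (Ideal.span {p}).IsMaximal := PrincipalIdealRing.isMaximal_of_irreducible hp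
  refine ⟨isSimpleModule_iff_isCoatom.mpr hmax.out, ?_⟩
  rintro ⟨ℳ, hℳ, hsmul⟩
  have : Nontrivial (K[T;T⁻¹] ⧸ Ideal.span {p}) := Ideal.Quotient.nontrivial_iff.mpr hmax.ne_top
  obtain ⟨n, y, hy, hy0⟩ := hℳ.exists_mem_ne_zero
  exact hy0 <| eq_zero_of_smul_eq_zero_of_mem hℳ hsmul hp.ne_zero hy <|
    Ideal.Quotient.smul_eq_zero_of_mem (Ideal.mem_span_singleton_self p) y
end
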